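/- arXiv:2410.06823 — 4 statements merged into one kernel-verified Lean document; each statement's English description precedes it below -/
import Mathlib

section
/- Let ε > 0 and β > ε/(4(1+ε)), and let Q be the symmetric matrix with Q₁₁ = β, Q₁₂ = (ε - 2β(1+ε))/2, Q₂₂ = β(1+ε)². Then the argument of the square root in the eigenvalue formula, β²(1+(1+ε)²)² - ε(4(1+ε)β - ε), is at least (ε((1+ε)²-1)/((1+ε)²+1))², and in particular is positive. -/
/-!
The discriminant is a quadratic in `β` with leading coefficient `s² > 0`, `s = 1 + (1 + ε)²`.
Completing the square writes it as a square plus its minimum value `ε²((1 + ε)² - 1)² / s²`,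
and this minimum equals `ε⁴(2 + ε)² / s²`.
-/

lemma discriminant_eq_sq_add_sq (ε β : ℝ) :
    β ^ 2 * (1 + (1 + ε) ^ 2) ^ 2 - ε * (4 * (1 + ε) * β - ε) =
      (β * (1 + (1 + ε) ^ 2) - 2 * ε * (1 + ε) / (1 + (1 + ε) ^ 2)) ^ 2 +
        (ε * ((1 + ε) ^ 2 - 1) / ((1 + ε) ^ 2 + 1)) ^ 2 := by
  field_simp
  ring

lemma discriminant_lower_bound_pos {ε : ℝ} (hε : 0 < ε) :
    0 < (ε * ((1 + ε) ^ 2 - 1) / ((1 + ε) ^ 2 + 1)) ^ 2 := by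
  have h : (1 + ε) ^ 2 - 1 = ε * (2 + ε) := by ring
  rw [h]
  positivity

theorem stmt_5_general (ε β : ℝ) (hε : 0 < ε) :
    (ε * ((1 + ε) ^ 2 - 1) / ((1 + ε) ^ 2 + 1)) ^ 2 ≤
      β ^ 2 * (1 + (1 + ε) ^ 2) ^ 2 - ε * (4 * (1 + ε) * β - ε) ∧
    0 < β ^ 2 * (1 + (1 + ε) ^ 2) ^ 2 - ε * (4 * (1 + ε) * β - ε) := by
  have hbound : (ε * ((1 + ε) ^ 2 - 1) / ((1 + ε) ^ 2 + 1)) ^ 2 ≤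
      β ^ 2 * (1 + (1 + ε) ^ 2) ^ 2 - ε * (4 * (1 + ε) * β - ε) := by
    rw [discriminant_eq_sq_add_sq]
    exact le_add_of_nonneg_left (sq_nonneg _)
  exact ⟨hbound, (discriminant_lower_bound_pos hε).trans_le hbound⟩

theorem stmt_5 (ε β : ℝ) (hε : 0 < ε) (hβ : ε / (4 * (1 + ε)) < β) :
    (ε * ((1 + ε) ^ 2 - 1) / ((1 + ε) ^ 2 + 1)) ^ 2 ≤
      β ^ 2 * (1 + (1 + ε) ^ 2) ^ 2 - ε * (4 * (1 + ε) * β - ε) ∧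
    0 < β ^ 2 * (1 + (1 + ε) ^ 2) ^ 2 - ε * (4 * (1 + ε) * β - ε) :=
  stmt_5_general ε β hε
end

section
/- Let λ₁, λ₂ > 0, ε > 0, β > ε/(4(1+ε)). Then for the closed-loop system η₁' = -βφ₁(η₁) - (1 + β(1+ε))φ₂(η₂), η₂' = -β(1+ε)φ₂(η₂) + (1-β)φ₁(η₁), the origin is the unique equilibrium, and V₁(η) = Φ₁(η₁) + (1+ε)Φ₂(η₂) is a strict Lyapunov function: V₁ is positive definite, radially unbounded, and its derivative along solutions is negative for all η ≠ 0. -/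
/-!
The equilibria are the zeros of a linear map in `(a, b) = (φ₁ η₁, φ₂ η₂)` with determinant
`1 + βε > 0`, and each `φᵢ` vanishes only at `0`. Since `Φᵢ' = φᵢ`, the derivative of `V₁` along
solutions is the quadratic form `-(β a² + (2β(1+ε) - ε) a b + β(1+ε)² b²)`, whose discriminant
`ε² - 4βε(1+ε)` is negative exactly when `β > ε / (4(1+ε))`. Positivity and radial unboundedness
of `V₁` come from `0 < eˣ - 1 - x` for `x ≠ 0` and `|x| - 2 ≤ eˣ - 1 - x`.
-/

open Filter

theorem eq_zero_and_eq_zero_of_det_ne_zero {K : Type*} [Field K] {a b c d x y : K}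
    (hdet : a * d - b * c ≠ 0) (h₁ : a * x + b * y = 0) (h₂ : c * x + d * y = 0) :
    x = 0 ∧ y = 0 := by
  have hx : (a * d - b * c) * x = 0 := by linear_combination d * h₁ - b * h₂
  have hy : (a * d - b * c) * y = 0 := by linear_combination a * h₂ - c * h₁
  exact ⟨(mul_eq_zero.mp hx).resolve_left hdet, (mul_eq_zero.mp hy).resolve_left hdet⟩

theorem quadratic_form_pos_of_discrim_neg {p q r a b : ℝ} (hp : 0 < p)
    (hdisc : discrim p q r < 0) (hab : a ≠ 0 ∨ b ≠ 0) :
    0 < p * a ^ 2 + q * (a * b) + r * b ^ 2 := by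
  rcases eq_or_ne b 0 with rfl | hb
  · have ha : a ≠ 0 := by simpa using hab
    have : 0 < a ^ 2 := by positivity
    simpa using mul_pos hp this
  · have hsq : 4 * p * (p * a ^ 2 + q * (a * b) + r * b ^ 2)
        = (2 * p * a + q * b) ^ 2 - discrim p q r * b ^ 2 := by rw [discrim]; ring
    have hdefect : 0 < -discrim p q r * b ^ 2 := mul_pos (neg_pos.mpr hdisc) (by positivity)
    refine pos_of_mul_pos_right (a := 4 * p) ?_ (by positivity)
    rw [hsq]
    linarith [sq_nonneg (2 * p * a + q * b)]

theorem closedLoop_eq_zero {β ε a b : ℝ} (hβ : 0 ≤ β) (hε : 0 ≤ ε)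
    (h₁ : -β * a - (1 + β * (1 + ε)) * b = 0) (h₂ : -β * (1 + ε) * b + (1 - β) * a = 0) :
    a = 0 ∧ b = 0 := by
  have hdet : -β * (-β * (1 + ε)) - -(1 + β * (1 + ε)) * (1 - β) ≠ 0 := by
    ring_nf; positivity
  exact eq_zero_and_eq_zero_of_det_ne_zero (x := a) (y := b) hdet
    (by linear_combination h₁) (by linear_combination h₂)

theorem closedLoop_lyapunov_derivative_neg {β ε a b : ℝ} (hε : 0 < ε)
    (hβ : ε < 4 * β * (1 + ε)) (hab : a ≠ 0 ∨ b ≠ 0) :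
    a * (-β * a - (1 + β * (1 + ε)) * b) + (1 + ε) * b * (-β * (1 + ε) * b + (1 - β) * a) < 0 := by
  have hβ0 : 0 < β := by nlinarith
  have hdisc : discrim β (2 * β * (1 + ε) - ε) (β * (1 + ε) ^ 2) < 0 := by
    rw [discrim]; nlinarith [mul_pos hε (sub_pos.mpr hβ)]
  linear_combination quadratic_form_pos_of_discrim_neg hβ0 hdisc hab

theorem abs_sub_two_le_exp_sub_one_sub (x : ℝ) : |x| - 2 ≤ Real.exp x - 1 - x := by
  rcases le_or_gt 0 x with hx | hx
  · rw [abs_of_nonneg hx]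
    -- `eˣ = (e^(x/2))² ≥ (1 + x/2)² ≥ 2x - 1`
    have h : Real.exp x = Real.exp (x / 2) ^ 2 := by rw [← Real.exp_nat_mul]; ring_nf
    nlinarith [Real.add_one_le_exp (x / 2), sq_nonneg (x / 2 - 1)]
  · rw [abs_of_neg hx]
    linarith [Real.exp_pos x]

theorem exp_sub_one_sub_nonneg (x : ℝ) : 0 ≤ Real.exp x - 1 - x := by
  linarith [Real.add_one_le_exp x]

theorem exp_sub_one_sub_pos {x : ℝ} (hx : x ≠ 0) : 0 < Real.exp x - 1 - x := by
  linarith [Real.add_one_lt_exp hx]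

theorem exp_neg_sub_one_add_nonneg (x : ℝ) : 0 ≤ Real.exp (-x) - 1 + x := by
  simpa using exp_sub_one_sub_nonneg (-x)

theorem exp_neg_sub_one_add_pos {x : ℝ} (hx : x ≠ 0) : 0 < Real.exp (-x) - 1 + x := by
  simpa using exp_sub_one_sub_pos (neg_ne_zero.mpr hx)

theorem tendsto_exp_sub_one_sub_cocompact :
    Tendsto (fun x => Real.exp x - 1 - x) (cocompact ℝ) atTop :=
  tendsto_atTop_mono abs_sub_two_le_exp_sub_one_sub
    (tendsto_atTop_add_const_right _ (-2) tendsto_norm_cocompact_atTop)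

theorem tendsto_exp_neg_sub_one_add_cocompact :
    Tendsto (fun x => Real.exp (-x) - 1 + x) (cocompact ℝ) atTop := by
  have hneg : Tendsto (fun x : ℝ => -x) (cocompact ℝ) (cocompact ℝ) :=
    (Homeomorph.neg ℝ).isClosedEmbedding.tendsto_cocompact
  simpa only [Function.comp_def, sub_neg_eq_add] using
    tendsto_exp_sub_one_sub_cocompact.comp hneg

theorem tendsto_add_cocompact_prod {X Y G : Type*} [TopologicalSpace X] [TopologicalSpace Y]
    [AddCommGroup G] [PartialOrder G] [IsOrderedAddMonoid G] {g₁ : X → G} {g₂ : Y → G}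
    {C₁ C₂ : G} (hC₁ : ∀ x, C₁ ≤ g₁ x) (hC₂ : ∀ y, C₂ ≤ g₂ y)
    (h₁ : Tendsto g₁ (cocompact X) atTop) (h₂ : Tendsto g₂ (cocompact Y) atTop) :
    Tendsto (fun p : X × Y => g₁ p.1 + g₂ p.2) (cocompact (X × Y)) atTop := by
  rw [← coprod_cocompact, Filter.coprod, tendsto_sup]
  exact ⟨tendsto_atTop_add_right_of_le _ C₂ (h₁.comp tendsto_comap) fun p => hC₂ p.2,
    tendsto_atTop_add_left_of_le _ C₁ (fun p => hC₁ p.1) (h₂.comp tendsto_comap)⟩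

theorem stmt_9 (l1 l2 ε β : ℝ) (hl1 : 0 < l1) (hl2 : 0 < l2)
    (hε : 0 < ε) (hβ : ε / (4 * (1 + ε)) < β)
    (φ₁ φ₂ Φ₁ Φ₂ : ℝ → ℝ)
    (hφ₁ : ∀ η, φ₁ η = (1 / l1) * (1 - Real.exp (-η)))
    (hφ₂ : ∀ η, φ₂ η = l2 * (Real.exp η - 1))
    (hΦ₁ : ∀ r, Φ₁ r = (1 / l1) * (Real.exp (-r) - 1 + r))
    (hΦ₂ : ∀ r, Φ₂ r = l2 * (Real.exp r - 1 - r))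
    (f : ℝ × ℝ → ℝ × ℝ)
    (hf : ∀ η : ℝ × ℝ, f η =
      (-β * φ₁ η.1 - (1 + β * (1 + ε)) * φ₂ η.2,
       -β * (1 + ε) * φ₂ η.2 + (1 - β) * φ₁ η.1))
    (V₁ : ℝ × ℝ → ℝ)
    (hV₁ : ∀ η : ℝ × ℝ, V₁ η = Φ₁ η.1 + (1 + ε) * Φ₂ η.2) :
    (∀ η : ℝ × ℝ, f η = 0 ↔ η = 0) ∧
    V₁ 0 = 0 ∧ (∀ η : ℝ × ℝ, η ≠ 0 → 0 < V₁ η) ∧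
    Tendsto V₁ (cocompact (ℝ × ℝ)) atTop ∧
    (∀ η : ℝ × ℝ, η ≠ 0 →
      φ₁ η.1 * (f η).1 + (1 + ε) * φ₂ η.2 * (f η).2 < 0) := by
  have hε1 : 0 < 1 + ε := by linarith
  have hβ0 : 0 < β := (by positivity : 0 ≤ ε / (4 * (1 + ε))).trans_lt hβ
  have hβε : ε < 4 * β * (1 + ε) := by linarith [(div_lt_iff₀ (by positivity)).mp hβ]
  have hΦ₁_nonneg : ∀ x, 0 ≤ Φ₁ x := fun x => by
    rw [hΦ₁]; exact mul_nonneg (by positivity) (exp_neg_sub_one_add_nonneg x)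
  have hΦ₂_nonneg : ∀ x, 0 ≤ (1 + ε) * Φ₂ x := fun x => by
    rw [hΦ₂]; exact mul_nonneg hε1.le (mul_nonneg hl2.le (exp_sub_one_sub_nonneg x))
  have hφ₁_eq_zero : ∀ x, φ₁ x = 0 ↔ x = 0 := fun x => by
    simp [hφ₁, hl1.ne', sub_eq_zero, eq_comm (a := (1 : ℝ))]
  have hφ₂_eq_zero : ∀ x, φ₂ x = 0 ↔ x = 0 := fun x => by
    simp [hφ₂, hl2.ne', sub_eq_zero]
  have hne : ∀ η : ℝ × ℝ, η ≠ 0 → η.1 ≠ 0 ∨ η.2 ≠ 0 := fun η hη => by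
    contrapose! hη
    exact Prod.ext hη.1 hη.2
  refine ⟨fun η => ⟨fun h => ?_, fun h => ?_⟩, by simp [hV₁, hΦ₁, hΦ₂], fun η hη => ?_, ?_,
    fun η hη => ?_⟩
  · obtain ⟨h₁, h₂⟩ := Prod.mk_eq_zero.mp ((hf η).symm.trans h)
    obtain ⟨hx, hy⟩ := closedLoop_eq_zero hβ0.le hε.le h₁ h₂
    exact Prod.ext ((hφ₁_eq_zero _).mp hx) ((hφ₂_eq_zero _).mp hy)
  · subst h
    simp [hf, hφ₁, hφ₂]
  · rw [hV₁]
    rcases hne η hη with h | h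
    · refine add_pos_of_pos_of_nonneg ?_ (hΦ₂_nonneg _)
      rw [hΦ₁]; exact mul_pos (by positivity) (exp_neg_sub_one_add_pos h)
    · refine add_pos_of_nonneg_of_pos (hΦ₁_nonneg _) ?_
      rw [hΦ₂]; exact mul_pos hε1 (mul_pos hl2 (exp_sub_one_sub_pos h))
  · rw [show V₁ = fun η => Φ₁ η.1 + (1 + ε) * Φ₂ η.2 from funext hV₁]
    refine tendsto_add_cocompact_prod hΦ₁_nonneg hΦ₂_nonneg ?_ ?_
    · simpa only [funext hΦ₁] using
        tendsto_exp_neg_sub_one_add_cocompact.const_mul_atTop (one_div_pos.mpr hl1)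
    · simpa only [hΦ₂] using
        (tendsto_exp_sub_one_sub_cocompact.const_mul_atTop hl2).const_mul_atTop hε1
  · rw [hf]
    refine closedLoop_lyapunov_derivative_neg hε hβε ?_
    simpa only [ne_eq, hφ₁_eq_zero, hφ₂_eq_zero] using hne η hη
end

section
/- Let u*, ε, β, δ > 0 with ελ₂ + β < u*, and let φ(η) = φ₁(η₁) + (1+ε)φ₂(η₂) with φ₁, φ₂ as in the predator-prey model (λ₁, λ₂ > 0). Then the feedback u(η) = u* + εφ₂(η₂) + β·φ(η)/√(δ² + (min(0, φ(η)))²) satisfies u(η) > 0 for every η ∈ ℝ². -/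
/-- For `δ = 0` this still holds, with `0 / 0 = 0` at `x = 0`. -/
theorem neg_one_le_div_sqrt_sq_add_min_sq (δ x : ℝ) :
    -1 ≤ x / Real.sqrt (δ ^ 2 + (min 0 x) ^ 2) := by
  rcases le_or_gt 0 x with hx | hx
  · exact neg_one_lt_zero.le.trans (div_nonneg hx (Real.sqrt_nonneg _))
  · rw [min_eq_right hx.le]
    have habs : |x| ≤ Real.sqrt (δ ^ 2 + x ^ 2) :=
      Real.abs_le_sqrt (le_add_of_nonneg_left (sq_nonneg δ))
    have hs : 0 < Real.sqrt (δ ^ 2 + x ^ 2) := (abs_pos.mpr hx.ne).trans_le habs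
    rw [le_div_iff₀ hs]
    linarith [neg_abs_le x]

theorem neg_le_mul_exp_sub_one {l : ℝ} (hl : 0 ≤ l) (η : ℝ) : -l ≤ l * (Real.exp η - 1) := by
  nlinarith [mul_nonneg hl (Real.exp_pos η).le]

theorem stmt_12_general (l2 ustar ε β δ : ℝ) (hl2 : 0 < l2)
    (hε : 0 < ε) (hβ : 0 < β)
    (hgain : ε * l2 + β < ustar)
    (φ₂ : ℝ → ℝ)
    (hφ₂ : ∀ η, φ₂ η = l2 * (Real.exp η - 1))
    (φ : ℝ × ℝ → ℝ)
    (u : ℝ × ℝ → ℝ)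
    (hu : ∀ η : ℝ × ℝ, u η = ustar + ε * φ₂ η.2 +
      β * φ η / Real.sqrt (δ ^ 2 + (min 0 (φ η)) ^ 2)) :
    ∀ η : ℝ × ℝ, 0 < u η := by
  intro η
  have hφ₂_ge : -(ε * l2) ≤ ε * φ₂ η.2 := by
    rw [hφ₂, ← mul_neg]
    exact mul_le_mul_of_nonneg_left (neg_le_mul_exp_sub_one hl2.le η.2) hε.le
  have hsat : -β ≤ β * φ η / Real.sqrt (δ ^ 2 + (min 0 (φ η)) ^ 2) := by
    rw [mul_div_assoc, ← mul_neg_one]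
    exact mul_le_mul_of_nonneg_left (neg_one_le_div_sqrt_sq_add_min_sq δ (φ η)) hβ.le
  rw [hu]
  linarith

theorem stmt_12 (l1 l2 ustar ε β δ : ℝ) (hl1 : 0 < l1) (hl2 : 0 < l2)
    (hustar : 0 < ustar) (hε : 0 < ε) (hβ : 0 < β) (hδ : 0 < δ)
    (hgain : ε * l2 + β < ustar)
    (φ₁ φ₂ : ℝ → ℝ)
    (hφ₁ : ∀ η, φ₁ η = (1 / l1) * (1 - Real.exp (-η)))
    (hφ₂ : ∀ η, φ₂ η = l2 * (Real.exp η - 1))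
    (φ : ℝ × ℝ → ℝ)
    (hφ : ∀ η : ℝ × ℝ, φ η = φ₁ η.1 + (1 + ε) * φ₂ η.2)
    (u : ℝ × ℝ → ℝ)
    (hu : ∀ η : ℝ × ℝ, u η = ustar + ε * φ₂ η.2 +
      β * φ η / Real.sqrt (δ ^ 2 + (min 0 (φ η)) ^ 2)) :
    ∀ η : ℝ × ℝ, 0 < u η :=
  stmt_12_general l2 ustar ε β δ hl2 hε hβ hgain φ₂ hφ₂ φ u hu
end

section
/- Let λ₁, λ₂, ε, δ > 0, β ≥ 0, φ₁(η) = (1/λ₁)(1-e^{-η}), φ₂(η) = λ₂(e^{η}-1), φ(η) = φ₁(η₁)+(1+ε)φ₂(η₂). Along solutions of η₁' = u* - u - φ₂(η₂), η₂' = u* - u + φ₁(η₁) with the saturated feedback u = u* + εφ₂(η₂) + βφ(η)/√(δ²+(min(0,φ(η)))²), the derivative of V₁(η) = Φ₁(η₁) + (1+ε)Φ₂(η₂) equals -ε(1+ε)φ₂(η₂)² - βφ(η)²/√(δ²+(min(0,φ(η)))²), which is nonpositive, and strictly negative for all η ≠ 0 when β > 0. -/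
/-!
With `Φᵢ' = φᵢ`, the chain rule gives `V₁' = φ₁ η₁' + (1 + ε) φ₂ η₂'`. In the closed loop both
components share the input `v = u* - u`, so `V₁' = φ v + ε φ₁ φ₂`, and the feedback
`v = -ε φ₂ - β φ / √(δ² + min(0, φ)²)` cancels the cross term, leaving
`-ε (1 + ε) φ₂² - β φ² / √(δ² + min(0, φ)²)`. Both summands are nonpositive; for `η ≠ 0` either
`φ₂(η₂) ≠ 0`, or `η₂ = 0` and then `φ(η) = φ₁(η₁) ≠ 0`, since `φ₁` and `φ₂` vanish only at `0`.
-/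

open Real

theorem hasDerivAt_exp_neg_sub_one_add (r : ℝ) :
    HasDerivAt (fun r => exp (-r) - 1 + r) (1 - exp (-r)) r := by
  refine ((((hasDerivAt_neg r).exp).sub_const 1).fun_add (hasDerivAt_id' r)).congr_deriv ?_
  ring

theorem hasDerivAt_exp_sub_one_sub (r : ℝ) :
    HasDerivAt (fun r => exp r - 1 - r) (exp r - 1) r := by
  simpa using ((hasDerivAt_exp r).sub_const 1).fun_sub (hasDerivAt_id' r)

theorem mul_exp_sub_one_eq_zero_iff {c x : ℝ} (hc : c ≠ 0) : c * (exp x - 1) = 0 ↔ x = 0 := by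
  rw [mul_eq_zero, sub_eq_zero, exp_eq_one_iff, or_iff_right hc]

theorem mul_one_sub_exp_neg_eq_zero_iff {c x : ℝ} (hc : c ≠ 0) :
    c * (1 - exp (-x)) = 0 ↔ x = 0 := by
  rw [mul_eq_zero, sub_eq_zero, eq_comm (a := 1), exp_eq_one_iff, neg_eq_zero, or_iff_right hc]

theorem hasDerivAt_lyapunov_of_skew {Φ₁ Φ₂ φ₁ φ₂ η₁ η₂ : ℝ → ℝ} {c v t : ℝ}
    (hΦ₁ : HasDerivAt Φ₁ (φ₁ (η₁ t)) (η₁ t)) (hΦ₂ : HasDerivAt Φ₂ (φ₂ (η₂ t)) (η₂ t))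
    (h₁ : HasDerivAt η₁ (v - φ₂ (η₂ t)) t) (h₂ : HasDerivAt η₂ (v + φ₁ (η₁ t)) t) :
    HasDerivAt (fun s => Φ₁ (η₁ s) + c * Φ₂ (η₂ s))
      ((φ₁ (η₁ t) + c * φ₂ (η₂ t)) * v + (c - 1) * φ₁ (η₁ t) * φ₂ (η₂ t)) t := by
  refine ((hΦ₁.comp t h₁).fun_add ((hΦ₂.comp t h₂).const_mul c)).congr_deriv ?_
  ring

theorem stmt_13 (l1 l2 ustar ε β δ : ℝ) (hl1 : 0 < l1) (hl2 : 0 < l2)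
    (hε : 0 < ε) (hβ : 0 ≤ β) (hδ : 0 < δ)
    (φ₁ φ₂ Φ₁ Φ₂ : ℝ → ℝ)
    (hφ₁ : ∀ η, φ₁ η = (1 / l1) * (1 - Real.exp (-η)))
    (hφ₂ : ∀ η, φ₂ η = l2 * (Real.exp η - 1))
    (hΦ₁ : ∀ r, Φ₁ r = (1 / l1) * (Real.exp (-r) - 1 + r))
    (hΦ₂ : ∀ r, Φ₂ r = l2 * (Real.exp r - 1 - r))
    (φ : ℝ × ℝ → ℝ)
    (hφ : ∀ η : ℝ × ℝ, φ η = φ₁ η.1 + (1 + ε) * φ₂ η.2)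
    (W : ℝ × ℝ → ℝ)
    (hW : ∀ η : ℝ × ℝ, W η = -(ε * (1 + ε) * (φ₂ η.2) ^ 2)
      - β * (φ η) ^ 2 / Real.sqrt (δ ^ 2 + (min 0 (φ η)) ^ 2))
    (u : ℝ × ℝ → ℝ)
    (hu : ∀ η : ℝ × ℝ, u η = ustar + ε * φ₂ η.2 +
      β * φ η / Real.sqrt (δ ^ 2 + (min 0 (φ η)) ^ 2))
    (η₁ η₂ : ℝ → ℝ)
    (h1 : ∀ t, HasDerivAt η₁ ((ustar - u (η₁ t, η₂ t)) - φ₂ (η₂ t)) t)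
    (h2 : ∀ t, HasDerivAt η₂ ((ustar - u (η₁ t, η₂ t)) + φ₁ (η₁ t)) t) :
    (∀ t, HasDerivAt (fun s => Φ₁ (η₁ s) + (1 + ε) * Φ₂ (η₂ s))
        (W (η₁ t, η₂ t)) t) ∧
    (∀ η : ℝ × ℝ, W η ≤ 0) ∧
    (0 < β → ∀ η : ℝ × ℝ, η ≠ 0 → W η < 0) := by
  refine ⟨fun t => ?_, fun η => ?_, fun hβpos η hη => ?_⟩
  · have hΦ₁' : HasDerivAt Φ₁ (φ₁ (η₁ t)) (η₁ t) := by
      rw [funext hΦ₁, hφ₁]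
      exact (hasDerivAt_exp_neg_sub_one_add _).const_mul _
    have hΦ₂' : HasDerivAt Φ₂ (φ₂ (η₂ t)) (η₂ t) := by
      rw [funext hΦ₂, hφ₂]
      exact (hasDerivAt_exp_sub_one_sub _).const_mul _
    refine (hasDerivAt_lyapunov_of_skew hΦ₁' hΦ₂' (h1 t) (h2 t)).congr_deriv ?_
    rw [hW, hu, hφ]
    ring
  · have : 0 ≤ ε * (1 + ε) * φ₂ η.2 ^ 2 + β * φ η ^ 2 / √(δ ^ 2 + (min 0 (φ η)) ^ 2) := by
      positivity
    rw [hW]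
    linarith
  · have hfeedback : 0 ≤ β * φ η ^ 2 / √(δ ^ 2 + (min 0 (φ η)) ^ 2) := by
      positivity
    rw [hW]
    by_cases hφ₂0 : φ₂ η.2 = 0
    · have hη₂ : η.2 = 0 := (mul_exp_sub_one_eq_zero_iff hl2.ne').1 (hφ₂ η.2 ▸ hφ₂0)
      have hη₁ : η.1 ≠ 0 := fun hη₁ => hη (Prod.ext hη₁ hη₂)
      have hφ0 : φ η ≠ 0 := by
        rw [hφ, hφ₂0, mul_zero, add_zero, hφ₁]
        exact (mul_one_sub_exp_neg_eq_zero_iff (by positivity)).not.2 hη₁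
      have : 0 < β * φ η ^ 2 / √(δ ^ 2 + (min 0 (φ η)) ^ 2) := by positivity
      rw [hφ₂0]
      linarith
    · have : 0 < ε * (1 + ε) * φ₂ η.2 ^ 2 := by positivity
      linarith
end
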